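/- arXiv:math/0610577 — 3 statements merged into one kernel-verified Lean document; each statement's English description precedes it below -/
import Mathlib

section
/- The sum of the two convergent improper integrals ∫₀¹ ((1 + e^{-2t})/(1 - e^{-2t}) − 1/t) · (1/t) dt and ∫₁^∞ (2e^{-2t}/(1 - e^{-2t})) · (1/t) dt equals 1 − log π + γ, where γ is the Euler–Mascheroni constant. -/
/-!
Let `g` be `coth t - 1/t` on `(0, 1]` and `coth t - 1` on `(1, ∞)`. It is `O(t)` at `0` and
decays exponentially, so its Mellin transform `M(s) = ∫₀^∞ t^(s-1) g(t) dt` is holomorphic on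
`Re s > -1`, and the sum of the two integrals is `M(0)`. Writing `coth t = 1 + 2 / (e^{2t} - 1)`
and expanding `1 / (e^u - 1) = ∑ e^{-(n+1)u}` gives `M(s) = 2^(1-s) Γ(s) ζ(s) + 1/s + 1/(1-s)`
for `Re s > 1`, hence off the real axis by analytic continuation. As `Γ(s) = Γ(1+s)/s` and
`ζ(0) = -1/2`, the first two terms are the difference quotient at `0` of
`H(s) = 2^(1-s) Γ(1+s) ζ(s)`, so `M(0) = H'(0) + 1 = log 2 + γ - log (2π) + 1`, using
`Γ'(1) = -γ` and `ζ'(0) = -log (2π) / 2`.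
-/

open Set Filter Topology Asymptotics MeasureTheory Complex
open scoped Real

local notation "γ" => Real.eulerMascheroniConstant

namespace Real

theorem inv_exp_sub_one_le_inv {u : ℝ} (hu : 0 < u) : (exp u - 1)⁻¹ ≤ u⁻¹ :=
  inv_anti₀ hu (by linarith [add_one_le_exp u])

theorem inv_exp_sub_one_le_two_mul_exp_neg {u : ℝ} (hu : log 2 ≤ u) :
    (exp u - 1)⁻¹ ≤ 2 * exp (-u) := by
  have h2 : 2 ≤ exp u := by simpa [exp_log two_pos] using exp_le_exp.mpr hu
  rw [exp_neg, ← div_eq_mul_inv, inv_le_comm₀ (by linarith) (by positivity), inv_div]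
  linarith

theorem abs_inv_exp_sub_one_sub_inv_add_half_le {u : ℝ} (hu : 0 < u) (hu' : u ≤ 1) :
    |(exp u - 1)⁻¹ - u⁻¹ + 1 / 2| ≤ u / 2 := by
  have hA := exp_bound (x := u) (by rwa [abs_of_pos hu]) (n := 3) (by norm_num)
  simp only [Finset.sum_range_succ, Finset.sum_range_zero, abs_of_pos hu] at hA
  norm_num [Nat.factorial] at hA
  set A := exp u - (1 + u + u ^ 2 / 2) with hA_def
  have hE : u ≤ exp u - 1 := by linarith [add_one_le_exp u]
  have hD : 0 < 2 * u * (exp u - 1) := by have := hu.trans_le hE; positivity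
  have hkey :
      (exp u - 1)⁻¹ - u⁻¹ + 1 / 2 = (u ^ 3 / 2 + (u - 2) * A) / (2 * u * (exp u - 1)) := by
    rw [hA_def]
    field_simp [(by linarith : exp u - 1 ≠ 0)]
    ring
  rw [hkey, abs_div, abs_of_pos hD, div_le_iff₀ hD]
  have hA' := abs_le.mp hA
  have hnum : |u ^ 3 / 2 + (u - 2) * A| ≤ u ^ 3 := by
    rw [abs_le]; constructor <;> nlinarith
  nlinarith

theorem hasSum_exp_neg_nat_succ_mul {t : ℝ} (ht : 0 < t) :
    HasSum (fun n : ℕ => exp (-(n + 1) * t)) (exp t - 1)⁻¹ := by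
  have hgeom := (hasSum_geometric_of_lt_one (exp_pos (-t)).le
    (exp_lt_one_iff.mpr (neg_neg_of_pos ht))).mul_right (exp (-t))
  have hval : (1 - exp (-t))⁻¹ * exp (-t) = (exp t - 1)⁻¹ := by
    have : exp t - 1 ≠ 0 := by linarith [add_one_lt_exp ht.ne']
    rw [exp_neg]
    field_simp
  rw [← hval]
  refine hgeom.congr_fun fun n => ?_
  rw [← exp_nat_mul, ← exp_add]
  ring_nf

theorem continuousOn_inv_exp_sub_one : ContinuousOn (fun u => (exp u - 1)⁻¹) (Ioi 0) :=
  fun u (hu : 0 < u) => by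
    have : exp u - 1 ≠ 0 := by linarith [add_one_lt_exp hu.ne']
    fun_prop (disch := exact this)

theorem isBigO_inv_exp_sub_one_atTop :
    (fun u => (exp u - 1)⁻¹) =O[atTop] fun u => exp (-1 * u) := by
  refine IsBigO.of_bound 2 ?_
  filter_upwards [eventually_ge_atTop (log 2)] with u hu
  have hu0 : 0 < u := (log_pos one_lt_two).trans_le hu
  have hpos : 0 < exp u - 1 := by linarith [add_one_lt_exp hu0.ne']
  rw [norm_inv, norm_of_nonneg hpos.le, norm_of_nonneg (exp_pos _).le, neg_one_mul]
  exact inv_exp_sub_one_le_two_mul_exp_neg hu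

theorem isBigO_inv_exp_sub_one_nhdsGT :
    (fun u => (exp u - 1)⁻¹) =O[𝓝[>] 0] fun u => u ^ (-1 : ℝ) := by
  refine IsBigO.of_bound 1 ?_
  filter_upwards [self_mem_nhdsWithin] with u (hu : 0 < u)
  have hpos : 0 < exp u - 1 := by linarith [add_one_lt_exp hu.ne']
  rw [norm_inv, norm_of_nonneg hpos.le, norm_of_nonneg (rpow_nonneg hu.le _), rpow_neg_one,
    one_mul]
  exact inv_exp_sub_one_le_inv hu

theorem one_add_exp_neg_div_one_sub_exp_neg {x : ℝ} (hx : x ≠ 0) :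
    (1 + exp (-x)) / (1 - exp (-x)) = 1 + 2 * (exp x - 1)⁻¹ := by
  have : exp x - 1 ≠ 0 := sub_ne_zero.mpr (mt (exp_eq_one_iff x).mp hx)
  rw [exp_neg]
  field_simp
  ring

theorem two_mul_exp_neg_div_one_sub_exp_neg {x : ℝ} (hx : x ≠ 0) :
    2 * exp (-x) / (1 - exp (-x)) = 2 * (exp x - 1)⁻¹ := by
  have : exp x - 1 ≠ 0 := sub_ne_zero.mpr (mt (exp_eq_one_iff x).mp hx)
  rw [exp_neg]
  field_simp

end Real

theorem mellinConvergent_inv_exp_sub_one {s : ℂ} (hs : 1 < s.re) :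
    MellinConvergent (fun t : ℝ => (((rexp t - 1)⁻¹ : ℝ) : ℂ)) s :=
  mellinConvergent_of_isBigO_rpow_exp one_pos
    (continuous_ofReal.comp_continuousOn Real.continuousOn_inv_exp_sub_one |>.locallyIntegrableOn
      measurableSet_Ioi)
    (isBigO_ofReal_left.mpr Real.isBigO_inv_exp_sub_one_atTop)
    (by simpa using isBigO_ofReal_left.mpr Real.isBigO_inv_exp_sub_one_nhdsGT) hs

theorem mellin_inv_exp_sub_one {s : ℂ} (hs : 1 < s.re) :
    mellin (fun t : ℝ => (((rexp t - 1)⁻¹ : ℝ) : ℂ)) s = Gamma s * riemannZeta s := by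
  have hsummable : Summable fun n : ℕ => ‖(1 : ℂ)‖ / ((n : ℝ) + 1) ^ s.re := by
    simpa [abs_of_pos (Nat.cast_add_one_pos (α := ℝ) _)] using
      (Real.summable_one_div_nat_add_rpow 1 s.re).mpr hs
  have hsum := hasSum_mellin (a := fun _ : ℕ => 1) (p := fun n => n + 1) (s := s)
    (fun n => Or.inr n.cast_add_one_pos) (zero_lt_one.trans hs)
    (fun t ht => (hasSum_ofReal.mpr (Real.hasSum_exp_neg_nat_succ_mul ht)).congr_fun
      fun n => one_mul _) hsummable
  rw [← hsum.tsum_eq, zeta_eq_tsum_one_div_nat_add_one_cpow hs, ← tsum_mul_left]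
  simp [div_eq_mul_inv]

/-- `coth t - 1 / t` for `0 < t ≤ 1` and `coth t - 1` for `1 < t`, written with
`coth t = 1 + 2 / (e^{2t} - 1)`. -/
noncomputable def cothRemainder (t : ℝ) : ℝ :=
  2 * (rexp (2 * t) - 1)⁻¹ + (Ioc 0 1).indicator (fun t => 1 - t⁻¹) t

theorem cothRemainder_of_mem_Ioc {t : ℝ} (ht : t ∈ Ioc 0 1) :
    cothRemainder t = (1 + rexp (-2 * t)) / (1 - rexp (-2 * t)) - 1 / t := by
  rw [cothRemainder, indicator_of_mem ht, neg_mul,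
    Real.one_add_exp_neg_div_one_sub_exp_neg (by positivity [ht.1])]
  ring

theorem cothRemainder_of_one_lt {t : ℝ} (ht : 1 < t) :
    cothRemainder t = 2 * rexp (-2 * t) / (1 - rexp (-2 * t)) := by
  rw [cothRemainder, indicator_of_notMem fun h => ht.not_ge h.2, neg_mul,
    Real.two_mul_exp_neg_div_one_sub_exp_neg (by positivity), add_zero]

theorem ofReal_cothRemainder (t : ℝ) :
    (cothRemainder t : ℂ) = 2 * (((rexp (2 * t) - 1)⁻¹ : ℝ) : ℂ) +
      ((Ioc 0 1).indicator (fun _ => 1) t -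
        (Ioc 0 1).indicator (fun t : ℝ => (t : ℂ) ^ (-1 : ℂ)) t) := by
  by_cases ht : t ∈ Ioc 0 1
  · simp [cothRemainder, ht, cpow_neg_one]
  · simp [cothRemainder, ht]

theorem mellin_cothRemainder_of_one_lt_re {s : ℂ} (hs : 1 < s.re) :
    mellin (fun t => (cothRemainder t : ℂ)) s
      = 2 ^ (1 - s) * Gamma s * riemannZeta s + 1 / s + 1 / (1 - s) := by
  have hbose := (MellinConvergent.comp_mul_left two_pos).mpr (mellinConvergent_inv_exp_sub_one hs)
  have hone := hasMellin_one_Ioc (zero_lt_one.trans hs)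
  have hinv := hasMellin_cpow_Ioc (-1) (s := s) (by simpa using hs)
  have hdiff := hasMellin_sub hone.1 hinv.1
  have hsum := hasMellin_add (hbose.const_smul (2 : ℂ)) hdiff.1
  have hfun : (fun t => (cothRemainder t : ℂ)) =
      fun t => (2 : ℂ) • (((rexp (2 * t) - 1)⁻¹ : ℝ) : ℂ) +
        ((Ioc 0 1).indicator (fun _ => 1) t -
          (Ioc 0 1).indicator (fun t : ℝ => (t : ℂ) ^ (-1 : ℂ)) t) :=
    funext ofReal_cothRemainder
  rw [hfun, hsum.2, hdiff.2, mellin_const_smul,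
    mellin_comp_mul_left (fun u => (((rexp u - 1)⁻¹ : ℝ) : ℂ)) s two_pos,
    mellin_inv_exp_sub_one hs, hone.2, hinv.2, sub_eq_add_neg (1 : ℂ) s,
    cpow_add _ _ two_ne_zero, cpow_one, show s + -1 = -(1 + -s) by ring, div_neg, ofReal_ofNat,
    smul_eq_mul, smul_eq_mul]
  ring

theorem locallyIntegrableOn_cothRemainder : LocallyIntegrableOn cothRemainder (Ioi 0) := by
  rw [locallyIntegrableOn_iff isOpen_Ioi.isLocallyClosed]
  intro k hk hkc
  have hbose : ContinuousOn (fun t : ℝ => 2 * (rexp (2 * t) - 1)⁻¹) k :=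
    continuousOn_const.mul (Real.continuousOn_inv_exp_sub_one.comp
      (continuous_const_mul 2).continuousOn fun t ht =>
        show 0 < 2 * t by linarith [mem_Ioi.mp (hk ht)])
  have hinv : ContinuousOn (fun t : ℝ => 1 - t⁻¹) k :=
    continuousOn_const.sub (continuousOn_inv₀.mono fun t ht => (hk ht).ne')
  exact (hbose.integrableOn_compact hkc).add
    ((hinv.integrableOn_compact hkc).indicator measurableSet_Ioc)

theorem isBigO_cothRemainder_atTop : cothRemainder =O[atTop] fun t => rexp (-1 * t) := by
  refine IsBigO.of_bound 4 ?_
  filter_upwards [eventually_gt_atTop 1] with t ht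
  have hlog : Real.log 2 ≤ 2 * t := by linarith [Real.log_two_lt_d9]
  have hpos : 0 < rexp (2 * t) - 1 := by
    linarith [Real.add_one_lt_exp (by positivity : 2 * t ≠ 0)]
  have hexp : rexp (-(2 * t)) ≤ rexp (-1 * t) := Real.exp_le_exp.mpr (by linarith)
  rw [cothRemainder, indicator_of_notMem fun h => ht.not_ge h.2, add_zero,
    Real.norm_of_nonneg (by positivity), Real.norm_of_nonneg (Real.exp_pos _).le]
  linarith [Real.inv_exp_sub_one_le_two_mul_exp_neg hlog]

theorem isBigO_cothRemainder_nhdsGT : cothRemainder =O[𝓝[>] 0] fun t => t := by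
  refine IsBigO.of_bound 2 ?_
  filter_upwards [Ioo_mem_nhdsGT (by norm_num : (0 : ℝ) < 1 / 2)] with t ⟨ht0, ht1⟩
  have hbound := Real.abs_inv_exp_sub_one_sub_inv_add_half_le (u := 2 * t) (by positivity)
    (by linarith)
  rw [cothRemainder, indicator_of_mem (show t ∈ Ioc 0 1 from ⟨ht0, by linarith⟩),
    Real.norm_of_nonneg ht0.le, Real.norm_eq_abs]
  calc |2 * (rexp (2 * t) - 1)⁻¹ + (1 - t⁻¹)|
      = 2 * |(rexp (2 * t) - 1)⁻¹ - (2 * t)⁻¹ + 1 / 2| := by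
        rw [← abs_two, ← abs_mul, abs_two]
        congr 1
        field_simp
        ring
    _ ≤ 2 * t := by linarith

theorem mellinConvergent_cothRemainder {s : ℂ} (hs : -1 < s.re) :
    MellinConvergent (fun t => (cothRemainder t : ℂ)) s :=
  mellinConvergent_of_isBigO_rpow_exp one_pos
    (ofRealCLM.locallyIntegrableOn_comp locallyIntegrableOn_cothRemainder)
    (isBigO_ofReal_left.mpr isBigO_cothRemainder_atTop)
    (by simpa using isBigO_ofReal_left.mpr isBigO_cothRemainder_nhdsGT) hs

theorem differentiableAt_mellin_cothRemainder {s : ℂ} (hs : -1 < s.re) :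
    DifferentiableAt ℂ (mellin fun t => (cothRemainder t : ℂ)) s :=
  mellin_differentiableAt_of_isBigO_rpow_exp one_pos
    (ofRealCLM.locallyIntegrableOn_comp locallyIntegrableOn_cothRemainder)
    (isBigO_ofReal_left.mpr isBigO_cothRemainder_atTop)
    (by simpa using isBigO_ofReal_left.mpr isBigO_cothRemainder_nhdsGT) hs

theorem mellin_cothRemainder_eqOn :
    EqOn (mellin fun t => (cothRemainder t : ℂ))
      (fun s => 2 ^ (1 - s) * Gamma s * riemannZeta s + 1 / s + 1 / (1 - s))
      {s | -1 < s.re ∧ 0 < s.im} := by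
  have hopen : IsOpen {s : ℂ | -1 < s.re ∧ 0 < s.im} :=
    (isOpen_lt continuous_const continuous_re).inter (isOpen_lt continuous_const continuous_im)
  have hconv : Convex ℝ {s : ℂ | -1 < s.re ∧ 0 < s.im} :=
    (convex_halfSpace_re_gt (-1)).inter (convex_halfSpace_im_gt 0)
  -- the upper half of the strip is convex and avoids the poles `0`, `1`, `-n` of the right side
  refine AnalyticOnNhd.eqOn_of_preconnected_of_eventuallyEq (𝕜 := ℂ) (z₀ := 2 + I) ?_ ?_
    hconv.isPreconnected ⟨by norm_num, by norm_num⟩ ?_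
  · exact DifferentiableOn.analyticOnNhd
      (fun s hs => (differentiableAt_mellin_cothRemainder hs.1).differentiableWithinAt) hopen
  · refine DifferentiableOn.analyticOnNhd
      (fun s hs => DifferentiableAt.differentiableWithinAt ?_) hopen
    have hreal : ∀ x : ℝ, s ≠ x := fun x h => by simpa [h] using hs.2
    have hGamma : DifferentiableAt ℂ Gamma s :=
      differentiableAt_Gamma s fun m => by simpa using hreal (-m)
    have hzeta : DifferentiableAt ℂ riemannZeta s :=
      differentiableAt_riemannZeta (by simpa using hreal 1)
    have h0 : s ≠ 0 := by simpa using hreal 0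
    have h1 : 1 - s ≠ 0 := sub_ne_zero.mpr (by simpa using (hreal 1).symm)
    fun_prop (disch := assumption)
  · filter_upwards [(isOpen_lt continuous_const continuous_re).mem_nhds
      (by simp : (1 : ℝ) < (2 + I).re)] with s hs
    exact mellin_cothRemainder_of_one_lt_re hs

theorem hasDerivAt_two_cpow_mul_Gamma_one_add_mul_riemannZeta :
    HasDerivAt (fun s : ℂ => 2 ^ (1 - s) * Gamma (1 + s) * riemannZeta s)
      ((γ - Real.log π : ℝ) : ℂ) 0 := by
  have hpow :
      HasDerivAt (fun s : ℂ => (2 : ℂ) ^ (1 - s)) (2 ^ (1 - 0 : ℂ) * log 2 * (-1)) 0 :=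
    ((hasDerivAt_id (0 : ℂ)).const_sub 1).const_cpow (Or.inl two_ne_zero)
  have hGamma : HasDerivAt (fun s : ℂ => Gamma (1 + s)) (-γ) 0 := by
    simpa [add_comm] using (zero_add (1 : ℂ) ▸ hasDerivAt_Gamma_one).comp_add_const (0 : ℂ) 1
  have hzeta : HasDerivAt riemannZeta (-log (2 * π) / 2) 0 := by
    rw [← deriv_riemannZeta_zero]
    exact (differentiableAt_riemannZeta zero_ne_one).hasDerivAt
  have hlog : log (2 * π) = log 2 + Real.log π := by
    rw [← ofReal_ofNat, ← ofReal_mul, ← ofReal_log (by positivity),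
      ← ofReal_log zero_le_two, Real.log_mul two_ne_zero Real.pi_ne_zero, ofReal_add]
  refine ((hpow.mul hGamma).mul hzeta).congr_deriv ?_
  simp only [Pi.mul_apply, sub_zero, add_zero, cpow_one, Gamma_one, riemannZeta_zero, hlog]
  push_cast
  ring

theorem tendsto_two_cpow_mul_Gamma_mul_riemannZeta_add :
    Tendsto (fun s : ℂ => 2 ^ (1 - s) * Gamma s * riemannZeta s + 1 / s + 1 / (1 - s))
      (𝓝[≠] 0) (𝓝 ((1 - Real.log π + γ : ℝ) : ℂ)) := by
  have hslope := hasDerivAt_iff_tendsto_slope.mp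
    hasDerivAt_two_cpow_mul_Gamma_one_add_mul_riemannZeta
  have hinv : Tendsto (fun s : ℂ => 1 / (1 - s)) (𝓝[≠] 0) (𝓝 1) := by
    have : ContinuousAt (fun s : ℂ => 1 / (1 - s)) 0 := by fun_prop (disch := norm_num)
    simpa using this.tendsto.mono_left nhdsWithin_le_nhds
  convert (hslope.add hinv).congr' ?_ using 2
  · push_cast; ring
  filter_upwards [self_mem_nhdsWithin] with s (hs : s ≠ 0)
  rw [slope_def_field, add_comm 1 s, Gamma_add_one s hs]
  simp only [sub_zero, add_zero, cpow_one, Gamma_one, riemannZeta_zero]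
  field_simp
  ring

theorem mellin_cothRemainder_zero :
    mellin (fun t => (cothRemainder t : ℂ)) 0 = ((1 - Real.log π + γ : ℝ) : ℂ) := by
  -- approach `0` along the positive imaginary axis, where `mellin_cothRemainder_eqOn` applies
  have hpath : Tendsto (fun y : ℝ => (y : ℂ) * I) (𝓝[>] 0) (𝓝[≠] 0) := by
    refine tendsto_nhdsWithin_of_tendsto_nhds_of_eventually_within _ ?_ ?_
    · have : Continuous fun y : ℝ => (y : ℂ) * I := by fun_prop
      exact (this.tendsto' 0 0 (by simp)).mono_left nhdsWithin_le_nhds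
    · filter_upwards [self_mem_nhdsWithin] with y (hy : 0 < y)
      simpa using hy.ne'
  have hdomain :
      ∀ᶠ y : ℝ in 𝓝[>] 0, (y : ℂ) * I ∈ {s : ℂ | -1 < s.re ∧ 0 < s.im} := by
    filter_upwards [self_mem_nhdsWithin] with y (hy : 0 < y)
    simpa using hy
  have hcont := (differentiableAt_mellin_cothRemainder (s := 0) (by simp)).continuousAt
  refine tendsto_nhds_unique (hcont.tendsto.comp (hpath.mono_right nhdsWithin_le_nhds)) ?_
  exact (tendsto_two_cpow_mul_Gamma_mul_riemannZeta_add.comp hpath).congr'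
    (hdomain.mono fun y hy => (mellin_cothRemainder_eqOn hy).symm)

theorem mellin_cothRemainder_zero_eq_integral :
    mellin (fun t => (cothRemainder t : ℂ)) 0 =
      ((∫ t in Ioo (0 : ℝ) 1, ((1 + rexp (-2 * t)) / (1 - rexp (-2 * t)) - 1 / t) * (1 / t))
        + ∫ t in Ioi (1 : ℝ), (2 * rexp (-2 * t) / (1 - rexp (-2 * t))) * (1 / t) : ℝ) := by
  have hint := mellinConvergent_cothRemainder (s := 0) (by simp)
  rw [mellin, ← Ioc_union_Ioi_eq_Ioi zero_le_one, setIntegral_union (Ioc_disjoint_Ioi le_rfl)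
    measurableSet_Ioi (hint.mono_set Ioc_subset_Ioi_self)
    (hint.mono_set (Ioi_subset_Ioi zero_le_one)), ← integral_Ioc_eq_integral_Ioo, ofReal_add,
    ← integral_complex_ofReal, ← integral_complex_ofReal]
  congr 1
  · refine setIntegral_congr_fun measurableSet_Ioc fun t ht => ?_
    simp only [cothRemainder_of_mem_Ioc ht, zero_sub, cpow_neg_one, smul_eq_mul]
    rw [← ofReal_inv, ← ofReal_mul]
    congr 1
    ring
  · refine setIntegral_congr_fun measurableSet_Ioi fun t ht => ?_
    simp only [cothRemainder_of_one_lt ht, zero_sub, cpow_neg_one, smul_eq_mul]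
    rw [← ofReal_inv, ← ofReal_mul]
    congr 1
    ring

/-- Equation (3.42) of the paper: the sum of the two convergent improper integrals
`∫₀¹ ((1 + e^{-2t})/(1 - e^{-2t}) − 1/t) · (1/t) dt` and
`∫₁^∞ (2e^{-2t}/(1 - e^{-2t})) · (1/t) dt` equals `1 − log π + γ`,
where `γ` is the Euler–Mascheroni constant. -/
theorem integral_coth_sub_inv_add_integral_tail_eq :
    (∫ t in Set.Ioo (0 : ℝ) 1,
        ((1 + Real.exp (-2 * t)) / (1 - Real.exp (-2 * t)) - 1 / t) * (1 / t))
      + (∫ t in Set.Ioi (1 : ℝ),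
        (2 * Real.exp (-2 * t) / (1 - Real.exp (-2 * t))) * (1 / t))
      = 1 - Real.log Real.pi + Real.eulerMascheroniConstant := by
  exact_mod_cast mellin_cothRemainder_zero_eq_integral.symm.trans mellin_cothRemainder_zero
end

section
/- Let H be a complex Hilbert space, E a closed subspace of H with orthogonal projection p onto E, and set q = id − p. Let D : H → H be a (not necessarily continuous) complex-linear map, and let T > 0 and C > 0 be real constants. Assume: (i) p(D(p s)) = 0 for all s ∈ H; (ii) ‖p(D(q s))‖ ≤ ‖q s‖/T and ‖q(D(p s))‖ ≤ ‖p s‖/T for all s ∈ H; (iii) ‖q(D(q s))‖ ≥ C·√T·‖q s‖ for all s ∈ H. Then for every λ ∈ ℂ and every s ∈ H, ‖λ·s − D s‖ ≥ (1/2)·( (|λ| − 1/T)·‖p s‖ + (C·√T − |λ| − 1/T)·‖q s‖ ). -/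
/-!
Write `q = 1 - p` and `u = λ s - D s`. Since `p D p = 0`, the `E`-component is
`p u = λ p s - p D q s`, while the `Eᗮ`-component is `q u = λ q s - q D p s - q D q s`.
The reverse triangle inequality bounds `‖p u‖` and `‖q u‖` from below by the two summands
of the right-hand side, and both are at most `‖u‖` because `p` and `q` are orthogonal
projections.
-/

section Resolvent

variable {𝕜 H : Type*} [NormedField 𝕜] [SeminormedAddCommGroup H] [NormedSpace 𝕜 H]
  (p D : H →ₗ[𝕜] H) (lam : 𝕜) (s : H) {T b : ℝ}

theorem le_norm_proj_smul_sub_apply (hpDp : p (D (p s)) = 0)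
    (hpDq : ‖p (D (s - p s))‖ ≤ ‖s - p s‖ / T) :
    ‖lam‖ * ‖p s‖ - ‖s - p s‖ / T ≤ ‖p (lam • s - D s)‖ := by
  have hpu : p (lam • s - D s) = lam • p s - p (D (s - p s)) := by
    rw [map_sub, map_sub, map_sub, hpDp, map_smul]
    abel
  calc ‖lam‖ * ‖p s‖ - ‖s - p s‖ / T
      ≤ ‖lam • p s‖ - ‖p (D (s - p s))‖ := by rw [norm_smul]; linarith
    _ ≤ ‖p (lam • s - D s)‖ := hpu ▸ norm_sub_norm_le _ _

theorem le_norm_compl_smul_sub_apply (hqDp : ‖D (p s) - p (D (p s))‖ ≤ ‖p s‖ / T)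
    (hqDq : b * ‖s - p s‖ ≤ ‖D (s - p s) - p (D (s - p s))‖) :
    b * ‖s - p s‖ - ‖lam‖ * ‖s - p s‖ - ‖p s‖ / T ≤
      ‖(lam • s - D s) - p (lam • s - D s)‖ := by
  set qDp := D (p s) - p (D (p s))
  set qDq := D (s - p s) - p (D (s - p s))
  have hqu : (lam • s - D s) - p (lam • s - D s) = lam • (s - p s) - (qDq + qDp) := by
    simp only [qDp, qDq, map_sub, map_smul, smul_sub]
    abel
  calc b * ‖s - p s‖ - ‖lam‖ * ‖s - p s‖ - ‖p s‖ / T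
      ≤ ‖qDq‖ - ‖qDp‖ - ‖lam • (s - p s)‖ := by rw [norm_smul]; linarith
    _ ≤ ‖qDq + qDp‖ - ‖lam • (s - p s)‖ := by
      gcongr
      exact norm_sub_le_norm_add qDq qDp
    _ ≤ ‖(lam • s - D s) - p (lam • s - D s)‖ := by
      rw [hqu, norm_sub_rev]
      exact norm_sub_norm_le _ _

end Resolvent

theorem resolvent_lower_bound_general
    {H : Type*} [NormedAddCommGroup H] [InnerProductSpace ℂ H] [CompleteSpace H]
    (E : Submodule ℂ H) (hE : IsClosed (E : Set H))
    (p : H → H) (hp : ∀ x, haveI : CompleteSpace E := hE.completeSpace_coe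
      p x = (E.orthogonalProjectionOnto x : H))
    (D : H →ₗ[ℂ] H) (T C : ℝ)
    (h1 : ∀ s, p (D (p s)) = 0)
    (h2 : ∀ s, ‖p (D (s - p s))‖ ≤ ‖s - p s‖ / T)
    (h3 : ∀ s, ‖D (p s) - p (D (p s))‖ ≤ ‖p s‖ / T)
    (h4 : ∀ s, ‖D (s - p s) - p (D (s - p s))‖ ≥ C * Real.sqrt T * ‖s - p s‖) :
    ∀ (lam : ℂ) (s : H),
      ‖lam • s - D s‖ ≥
        (1 / 2) * ((‖lam‖ - 1 / T) * ‖p s‖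
          + (C * Real.sqrt T - ‖lam‖ - 1 / T) * ‖s - p s‖) := by
  have : CompleteSpace E := hE.completeSpace_coe
  obtain rfl : p = E.starProjection := funext hp
  intro lam s
  have hpu := le_norm_proj_smul_sub_apply E.starProjection.toLinearMap D lam s (h1 s) (h2 s)
  have hqu := le_norm_compl_smul_sub_apply E.starProjection.toLinearMap D lam s (h3 s) (h4 s)
  have hpu_le := E.norm_starProjection_apply_le (lam • s - D s)
  have hqu_le := Eᗮ.norm_starProjection_apply_le (lam • s - D s)
  rw [Submodule.starProjection_orthogonal_val] at hqu_le
  simp only [ContinuousLinearMap.coe_coe] at hpu hqu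
  linear_combination (hpu + hqu + hpu_le + hqu_le) / 2

/-- The abstract resolvent lower bound (4.29) of the paper: if `p` is the orthogonal
projection onto a closed subspace `E` of a complex Hilbert space `H`, `q = id − p`, and
`D : H → H` is a complex-linear map such that `p D p = 0`, `‖p D q s‖ ≤ ‖q s‖/T`,
`‖q D p s‖ ≤ ‖p s‖/T` and `‖q D q s‖ ≥ C √T ‖q s‖`, then for every `λ ∈ ℂ` and `s ∈ H`,
`‖λ s − D s‖ ≥ ½((|λ| − 1/T)‖p s‖ + (C √T − |λ| − 1/T)‖q s‖)`. -/
theorem resolvent_lower_bound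
    {H : Type*} [NormedAddCommGroup H] [InnerProductSpace ℂ H] [CompleteSpace H]
    (E : Submodule ℂ H) (hE : IsClosed (E : Set H))
    (p : H → H) (hp : ∀ x, haveI : CompleteSpace E := hE.completeSpace_coe
      p x = (E.orthogonalProjectionOnto x : H))
    (D : H →ₗ[ℂ] H) (T C : ℝ) (hT : 0 < T) (hC : 0 < C)
    (h1 : ∀ s, p (D (p s)) = 0)
    (h2 : ∀ s, ‖p (D (s - p s))‖ ≤ ‖s - p s‖ / T)
    (h3 : ∀ s, ‖D (p s) - p (D (p s))‖ ≤ ‖p s‖ / T)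
    (h4 : ∀ s, ‖D (s - p s) - p (D (s - p s))‖ ≥ C * Real.sqrt T * ‖s - p s‖) :
    ∀ (lam : ℂ) (s : H),
      ‖lam • s - D s‖ ≥
        (1 / 2) * ((‖lam‖ - 1 / T) * ‖p s‖
          + (C * Real.sqrt T - ‖lam‖ - 1 / T) * ‖s - p s‖) :=
  resolvent_lower_bound_general E hE p hp D T C h1 h2 h3 h4
end

section
/- Let H be a complex Hilbert space, E a closed subspace of H with orthogonal projection p onto E, and set q = id − p. Let D : H → H be a complex-linear map, and let T > 0, C > 0 be real constants satisfying hypotheses: (i) p(D(p s)) = 0 for all s; (ii) ‖p(D(q s))‖ ≤ ‖q s‖/T and ‖q(D(p s))‖ ≤ ‖p s‖/T for all s; (iii) ‖q(D(q s))‖ ≥ C·√T·‖q s‖ for all s. Suppose λ ∈ ℂ and δ > 0 are such that |λ| − 1/T ≥ 2δ and C·√T − |λ| − 1/T ≥ 2δ. Then for every s ∈ H, ‖λ²·s − D(D s)‖ ≥ δ²·‖s‖; in particular λ² is not an eigenvalue of D². -/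
/-!
Write `s = p s + q s` with `q = 1 - p`. As `D` maps `E` into `Eᗮ`, the `E`-component of
`μ s - D s` is `μ p s - p D q s`, of norm at least `|μ| ‖p s‖ - ‖q s‖ / T`, while its
`Eᗮ`-component is dominated by `q D q s`, of norm at least `(C √T - |μ|) ‖q s‖ - ‖p s‖ / T`.
Adding the two bounds gives `‖μ s - D s‖ ≥ δ ‖s‖` for both `μ = λ` and `μ = -λ`, and
`λ² - D² = (λ - D)(λ + D)` yields the factor `δ²`.
-/

namespace Submodule

variable {𝕜 H : Type*} [RCLike 𝕜] [NormedAddCommGroup H] [InnerProductSpace 𝕜 H]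
  {K : Submodule 𝕜 H} [K.HasOrthogonalProjection] {D : H →ₗ[𝕜] H} {ε c : ℝ}

theorem starProjection_smul_sub_apply (h1 : ∀ s, K.starProjection (D (K.starProjection s)) = 0)
    (μ : 𝕜) (s : H) :
    K.starProjection (μ • s - D s) =
      μ • K.starProjection s - K.starProjection (D (s - K.starProjection s)) := by
  conv_lhs => rw [← add_sub_cancel (K.starProjection s) s, map_add D]
  rw [map_sub, map_add, h1, zero_add, map_smul, add_sub_cancel]

theorem le_norm_smul_sub_apply_of_starProjection
    (h1 : ∀ s, K.starProjection (D (K.starProjection s)) = 0)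
    (h2 : ∀ s, ‖K.starProjection (D (s - K.starProjection s))‖ ≤ ε * ‖s - K.starProjection s‖)
    (μ : 𝕜) (s : H) :
    ‖μ‖ * ‖K.starProjection s‖ - ε * ‖s - K.starProjection s‖ ≤ ‖μ • s - D s‖ := by
  set P := K.starProjection
  calc ‖μ‖ * ‖P s‖ - ε * ‖s - P s‖ ≤ ‖μ • P s‖ - ‖P (D (s - P s))‖ := by
        rw [norm_smul]; linarith [h2 s]
    _ ≤ ‖P (μ • s - D s)‖ := starProjection_smul_sub_apply h1 μ s ▸ norm_sub_norm_le _ _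
    _ ≤ ‖μ • s - D s‖ := K.norm_starProjection_apply_le _

theorem le_norm_smul_sub_apply_of_orthogonal
    (h1 : ∀ s, K.starProjection (D (K.starProjection s)) = 0)
    (h3 : ∀ s, ‖D (K.starProjection s) - K.starProjection (D (K.starProjection s))‖ ≤
      ε * ‖K.starProjection s‖)
    (h4 : ∀ s, c * ‖s - K.starProjection s‖ ≤
      ‖D (s - K.starProjection s) - K.starProjection (D (s - K.starProjection s))‖)
    (μ : 𝕜) (s : H) :
    (c - ‖μ‖) * ‖s - K.starProjection s‖ - ε * ‖K.starProjection s‖ ≤ ‖μ • s - D s‖ := by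
  set P := K.starProjection
  set r := μ • s - D s
  have hr : D (s - P s) - P (D (s - P s)) =
      (μ • (s - P s) - (D (P s) - P (D (P s)))) - (r - P r) := by
    have hDs : D s = D (P s) + D (s - P s) := by rw [← map_add, add_sub_cancel]
    rw [starProjection_smul_sub_apply h1, h1]
    simp only [r, hDs, smul_sub]
    abel
  have hPr : ‖r - P r‖ ≤ ‖r‖ := by simpa using Kᗮ.norm_starProjection_apply_le r
  calc (c - ‖μ‖) * ‖s - P s‖ - ε * ‖P s‖
      ≤ ‖D (s - P s) - P (D (s - P s))‖ - ‖μ • (s - P s)‖ - ‖D (P s) - P (D (P s))‖ := by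
        rw [norm_smul]; linarith [h3 s, h4 s]
    _ ≤ ‖r - P r‖ := by
        rw [hr]; linarith [norm_sub_le (μ • (s - P s) - (D (P s) - P (D (P s)))) (r - P r),
          norm_sub_le (μ • (s - P s)) (D (P s) - P (D (P s)))]
    _ ≤ ‖r‖ := hPr

theorem mul_norm_le_norm_smul_sub_apply
    (h1 : ∀ s, K.starProjection (D (K.starProjection s)) = 0)
    (h2 : ∀ s, ‖K.starProjection (D (s - K.starProjection s))‖ ≤ ε * ‖s - K.starProjection s‖)
    (h3 : ∀ s, ‖D (K.starProjection s) - K.starProjection (D (K.starProjection s))‖ ≤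
      ε * ‖K.starProjection s‖)
    (h4 : ∀ s, c * ‖s - K.starProjection s‖ ≤
      ‖D (s - K.starProjection s) - K.starProjection (D (s - K.starProjection s))‖)
    {μ : 𝕜} {δ : ℝ} (hδ : 0 ≤ δ) (hμ : 2 * δ ≤ ‖μ‖ - ε) (hμ' : 2 * δ ≤ c - ‖μ‖ - ε) (s : H) :
    δ * ‖s‖ ≤ ‖μ • s - D s‖ := by
  have hK := le_norm_smul_sub_apply_of_starProjection h1 h2 μ s
  have hKperp := le_norm_smul_sub_apply_of_orthogonal h1 h3 h4 μ s
  have hs : δ * ‖s‖ ≤ δ * (‖K.starProjection s‖ + ‖s - K.starProjection s‖) :=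
    mul_le_mul_of_nonneg_left (norm_le_norm_add_norm_sub' _ _) hδ
  nlinarith [mul_le_mul_of_nonneg_right hμ (norm_nonneg (K.starProjection s)),
    mul_le_mul_of_nonneg_right hμ' (norm_nonneg (s - K.starProjection s))]

end Submodule

theorem LinearMap.sq_mul_norm_le_norm_sq_smul_sub_apply_apply {R V : Type*} [CommRing R]
    [NormedAddCommGroup V] [Module R V] (D : V →ₗ[R] V) {μ : R} {δ : ℝ} (hδ : 0 ≤ δ)
    (hμ : ∀ s, δ * ‖s‖ ≤ ‖μ • s - D s‖) (hμ' : ∀ s, δ * ‖s‖ ≤ ‖(-μ) • s - D s‖) (s : V) :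
    δ ^ 2 * ‖s‖ ≤ ‖μ ^ 2 • s - D (D s)‖ := by
  set u := μ • s + D s
  have hfactor : μ ^ 2 • s - D (D s) = μ • u - D u := by
    simp only [u, map_add, map_smul, smul_add, sq, mul_smul]
    abel
  have hu : ‖(-μ) • s - D s‖ = ‖u‖ := by
    rw [neg_smul, ← neg_add', norm_neg]
  calc δ ^ 2 * ‖s‖ = δ * (δ * ‖s‖) := by ring
    _ ≤ δ * ‖u‖ := mul_le_mul_of_nonneg_left (hu ▸ hμ' s) hδ
    _ ≤ ‖μ ^ 2 • s - D (D s)‖ := hfactor ▸ hμ u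

theorem Module.End.not_hasEigenvalue_of_mul_norm_le {R V : Type*} [CommRing R]
    [NormedAddCommGroup V] [Module R V] (f : Module.End R V) {μ : R} {c : ℝ} (hc : 0 < c)
    (h : ∀ s, c * ‖s‖ ≤ ‖μ • s - f s‖) : ¬ f.HasEigenvalue μ := by
  intro hμ
  obtain ⟨v, hv⟩ := hμ.exists_hasEigenvector
  have := h v
  rw [hv.apply_eq_smul, sub_self, norm_zero] at this
  exact (mul_pos hc (norm_pos_iff.mpr hv.2)).not_ge this

theorem sq_resolvent_lower_bound_general
    {H : Type*} [NormedAddCommGroup H] [InnerProductSpace ℂ H] [CompleteSpace H]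
    (E : Submodule ℂ H) (hE : IsClosed (E : Set H))
    (p : H → H) (hp : ∀ x, haveI : CompleteSpace E := hE.completeSpace_coe
      p x = (E.orthogonalProjection x : H))
    (D : H →ₗ[ℂ] H) (T C : ℝ)
    (h1 : ∀ s, p (D (p s)) = 0)
    (h2 : ∀ s, ‖p (D (s - p s))‖ ≤ ‖s - p s‖ / T)
    (h3 : ∀ s, ‖D (p s) - p (D (p s))‖ ≤ ‖p s‖ / T)
    (h4 : ∀ s, ‖D (s - p s) - p (D (s - p s))‖ ≥ C * Real.sqrt T * ‖s - p s‖)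
    (lam : ℂ) (δ : ℝ) (hδ : 0 < δ)
    (hlam1 : ‖lam‖ - 1 / T ≥ 2 * δ)
    (hlam2 : C * Real.sqrt T - ‖lam‖ - 1 / T ≥ 2 * δ) :
    (∀ s : H, ‖lam ^ 2 • s - D (D s)‖ ≥ δ ^ 2 * ‖s‖) ∧
      ¬ Module.End.HasEigenvalue (D ∘ₗ D) (lam ^ 2) := by
  have : CompleteSpace E := hE.completeSpace_coe
  obtain rfl : p = E.starProjection := funext hp
  have resolvent_bound (μ : ℂ) (hμ : ‖μ‖ = ‖lam‖) (s : H) : δ * ‖s‖ ≤ ‖μ • s - D s‖ :=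
    Submodule.mul_norm_le_norm_smul_sub_apply h1 (ε := 1 / T)
      (fun s => (h2 s).trans_eq (one_div_mul_eq_div _ _).symm)
      (fun s => (h3 s).trans_eq (one_div_mul_eq_div _ _).symm) h4 hδ.le
      (hμ ▸ hlam1) (hμ ▸ hlam2) s
  have sq_bound (s : H) : δ ^ 2 * ‖s‖ ≤ ‖lam ^ 2 • s - D (D s)‖ :=
    D.sq_mul_norm_le_norm_sq_smul_sub_apply_apply hδ.le (resolvent_bound lam rfl)
      (resolvent_bound (-lam) (norm_neg lam)) s
  exact ⟨sq_bound,
    Module.End.not_hasEigenvalue_of_mul_norm_le (D ∘ₗ D) (pow_pos hδ 2) sq_bound⟩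

/-- The abstract content of Proposition 4.2 of the paper (inequality (4.30)): under the
hypotheses of the resolvent lower bound, if `|λ| − 1/T ≥ 2δ` and `C√T − |λ| − 1/T ≥ 2δ`
for some `δ > 0`, then `‖λ² s − D² s‖ ≥ δ² ‖s‖` for all `s`; in particular `λ²` is not an
eigenvalue of `D²`. -/
theorem sq_resolvent_lower_bound
    {H : Type*} [NormedAddCommGroup H] [InnerProductSpace ℂ H] [CompleteSpace H]
    (E : Submodule ℂ H) (hE : IsClosed (E : Set H))
    (p : H → H) (hp : ∀ x, haveI : CompleteSpace E := hE.completeSpace_coe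
      p x = (E.orthogonalProjection x : H))
    (D : H →ₗ[ℂ] H) (T C : ℝ) (hT : 0 < T) (hC : 0 < C)
    (h1 : ∀ s, p (D (p s)) = 0)
    (h2 : ∀ s, ‖p (D (s - p s))‖ ≤ ‖s - p s‖ / T)
    (h3 : ∀ s, ‖D (p s) - p (D (p s))‖ ≤ ‖p s‖ / T)
    (h4 : ∀ s, ‖D (s - p s) - p (D (s - p s))‖ ≥ C * Real.sqrt T * ‖s - p s‖)
    (lam : ℂ) (δ : ℝ) (hδ : 0 < δ)
    (hlam1 : ‖lam‖ - 1 / T ≥ 2 * δ)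
    (hlam2 : C * Real.sqrt T - ‖lam‖ - 1 / T ≥ 2 * δ) :
    (∀ s : H, ‖lam ^ 2 • s - D (D s)‖ ≥ δ ^ 2 * ‖s‖) ∧
      ¬ Module.End.HasEigenvalue (D ∘ₗ D) (lam ^ 2) :=
  sq_resolvent_lower_bound_general E hE p hp D T C h1 h2 h3 h4 lam δ hδ hlam1 hlam2
end
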